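/- For each fixed n ≥ 1, the function 𝔔 ∋ Q ↦ sup_{f,g,h∈𝒟} ‖P_f^{[0,n]}(g) − P_f^{[0,n]}(h)‖₁ ∈ ℝ is continuous with respect to the metric d_u(Q₁,Q₂) := sup_{f∈𝒟} ‖ℚ₁(f) − ℚ₂(f)‖₁; consequently, for each fixed n the set { Q ∈ 𝔔 : sup_{f,g,h∈𝒟} ‖P_f^{[0,n]}(g) − P_f^{[0,n]}(h)‖₁ < 2 } is open in (𝔔, d_u). -/
import Mathlib


open MeasureTheory Filter Topology

noncomputable section

/-- The set of densities in `L¹(μ)`. -/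
def Density {X : Type*} [MeasurableSpace X] (μ : Measure X) : Set (Lp ℝ 1 μ) :=
  {f | 0 ≤ f ∧ ‖f‖ = 1}

/-- `Q : L¹ × L¹ → L¹` is a quadratic stochastic operator: bilinear, positivity preserving,
symmetric and `‖Q(f,g)‖₁ = ‖f‖₁ ‖g‖₁` for `f, g ≥ 0`. -/
structure IsQSO {X : Type*} [MeasurableSpace X] (μ : Measure X)
    (Q : Lp ℝ 1 μ → Lp ℝ 1 μ → Lp ℝ 1 μ) : Prop where
  add_left : ∀ f f' g, Q (f + f') g = Q f g + Q f' g
  smul_left : ∀ (c : ℝ) f g, Q (c • f) g = c • Q f g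
  add_right : ∀ f g g', Q f (g + g') = Q f g + Q f g'
  smul_right : ∀ (c : ℝ) f g, Q f (c • g) = c • Q f g
  nonneg : ∀ f g, 0 ≤ f → 0 ≤ g → 0 ≤ Q f g
  symm : ∀ f g, Q f g = Q g f
  norm_mul : ∀ f g, 0 ≤ f → 0 ≤ g → ‖Q f g‖ = ‖f‖ * ‖g‖

/-- The quadratic map `ℚ(f) = Q(f,f)`. -/
def QQ {X : Type*} [MeasurableSpace X] {μ : Measure X}
    (Q : Lp ℝ 1 μ → Lp ℝ 1 μ → Lp ℝ 1 μ) (f : Lp ℝ 1 μ) : Lp ℝ 1 μ := Q f f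

/-- The iterates `ℚⁿ`. -/
def Qiter {X : Type*} [MeasurableSpace X] {μ : Measure X}
    (Q : Lp ℝ 1 μ → Lp ℝ 1 μ → Lp ℝ 1 μ) (n : ℕ) : Lp ℝ 1 μ → Lp ℝ 1 μ := (QQ Q)^[n]

/-- `Pchain Q f n = P_f^{[0,n]}`, the nonhomogeneous Markov chain associated with `Q`
and the density `f`, i.e. `P_f^{[0,0]} = id` and
`P_f^{[0,n+1]}(g) = Q(ℚⁿ(f), P_f^{[0,n]}(g))`. -/
def Pchain {X : Type*} [MeasurableSpace X] {μ : Measure X}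
    (Q : Lp ℝ 1 μ → Lp ℝ 1 μ → Lp ℝ 1 μ) (f : Lp ℝ 1 μ) :
    ℕ → Lp ℝ 1 μ → Lp ℝ 1 μ
  | 0 => id
  | n + 1 => fun g => Q (Qiter Q n f) (Pchain Q f n g)

/-- The metric `d_u(Q₁,Q₂) = sup_{f ∈ 𝒟} ‖ℚ₁(f) - ℚ₂(f)‖₁`. -/
def du {X : Type*} [MeasurableSpace X] (μ : Measure X)
    (Q₁ Q₂ : Lp ℝ 1 μ → Lp ℝ 1 μ → Lp ℝ 1 μ) : ℝ :=
  ⨆ f : Density μ, ‖Q₁ f f - Q₂ f f‖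

/-- The metric `d̂_u(Q₁,Q₂) = sup_{f,g ∈ 𝒟} ‖Q₁(f,g) - Q₂(f,g)‖₁`. -/
def dhat {X : Type*} [MeasurableSpace X] (μ : Measure X)
    (Q₁ Q₂ : Lp ℝ 1 μ → Lp ℝ 1 μ → Lp ℝ 1 μ) : ℝ :=
  ⨆ f : Density μ, ⨆ g : Density μ, ‖Q₁ f g - Q₂ f g‖

/-- `supDiff μ Q n = sup_{f,g,h ∈ 𝒟} ‖P_f^{[0,n]}(g) - P_f^{[0,n]}(h)‖₁`. -/
def supDiff {X : Type*} [MeasurableSpace X] (μ : Measure X)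
    (Q : Lp ℝ 1 μ → Lp ℝ 1 μ → Lp ℝ 1 μ) (n : ℕ) : ℝ :=
  ⨆ f : Density μ, ⨆ g : Density μ, ⨆ h : Density μ,
    ‖Pchain Q f n g - Pchain Q f n h‖

/-- `Q` is norm quasi-mixing. -/
def NormQuasiMixing {X : Type*} [MeasurableSpace X] (μ : Measure X)
    (Q : Lp ℝ 1 μ → Lp ℝ 1 μ → Lp ℝ 1 μ) : Prop :=
  Tendsto (fun n => supDiff μ Q n) atTop (𝓝 0)

/-- `Q` is norm mixing (uniformly asymptotically stable). -/
def NormMixing {X : Type*} [MeasurableSpace X] (μ : Measure X)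
    (Q : Lp ℝ 1 μ → Lp ℝ 1 μ → Lp ℝ 1 μ) : Prop :=
  ∃ f ∈ Density μ,
    Tendsto (fun n => ⨆ g : Density μ, ‖Qiter Q n g - f‖) atTop (𝓝 0)

end


section AuxQSO

open MeasureTheory
variable {X : Type*} [MeasurableSpace X] {μ : Measure X}

theorem aux_norm_eq_integral (f : Lp ℝ 1 μ) (hf : 0 ≤ f) : ‖f‖ = ∫ a, f a ∂μ := by
  rw [L1.norm_eq_integral_norm]
  refine integral_congr_ae ?_
  filter_upwards [(Lp.coeFn_nonneg f).2 hf] with a ha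
  exact Real.norm_of_nonneg ha

theorem aux_norm_add (f g : Lp ℝ 1 μ) (hf : 0 ≤ f) (hg : 0 ≤ g) : ‖f + g‖ = ‖f‖ + ‖g‖ := by
  rw [aux_norm_eq_integral f hf, aux_norm_eq_integral g hg,
    aux_norm_eq_integral (f + g) (add_nonneg hf hg),
    ← integral_add (L1.integrable_coeFn f) (L1.integrable_coeFn g)]
  refine integral_congr_ae ?_
  filter_upwards [Lp.coeFn_add f g] with a ha
  rw [ha]; rfl

theorem aux_norm_posPart_le (f : Lp ℝ 1 μ) : ‖f⁺‖ ≤ ‖f‖ := by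
  apply norm_le_norm_of_abs_le_abs
  rw [abs_of_nonneg (posPart_nonneg f)]
  exact sup_le (le_abs_self f) (abs_nonneg f)

theorem aux_norm_negPart_le (f : Lp ℝ 1 μ) : ‖f⁻‖ ≤ ‖f‖ := by
  apply norm_le_norm_of_abs_le_abs
  rw [abs_of_nonneg (negPart_nonneg f)]
  exact sup_le (neg_le_abs f) (abs_nonneg f)

namespace IsQSO

variable {Q Q' : Lp ℝ 1 μ → Lp ℝ 1 μ → Lp ℝ 1 μ}

theorem neg_right (hQ : IsQSO μ Q) (f g : Lp ℝ 1 μ) : Q f (-g) = -Q f g := by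
  have := hQ.smul_right (-1) f g
  simpa using this

theorem sub_right (hQ : IsQSO μ Q) (f g g' : Lp ℝ 1 μ) : Q f (g - g') = Q f g - Q f g' := by
  rw [sub_eq_add_neg, hQ.add_right, hQ.neg_right, sub_eq_add_neg]

theorem sub_left (hQ : IsQSO μ Q) (f f' g : Lp ℝ 1 μ) : Q (f - f') g = Q f g - Q f' g := by
  rw [hQ.symm, hQ.sub_right, hQ.symm g f, hQ.symm g f']

theorem norm_le_right (hQ : IsQSO μ Q) {f : Lp ℝ 1 μ} (hf : 0 ≤ f) (g : Lp ℝ 1 μ) :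
    ‖Q f g‖ ≤ 2 * (‖f‖ * ‖g‖) := by
  have h1 : Q f g = Q f g⁺ - Q f g⁻ := by rw [← hQ.sub_right, posPart_sub_negPart]
  calc ‖Q f g‖ = ‖Q f g⁺ - Q f g⁻‖ := by rw [← h1]
    _ ≤ ‖Q f g⁺‖ + ‖Q f g⁻‖ := norm_sub_le _ _
    _ = ‖f‖ * ‖g⁺‖ + ‖f‖ * ‖g⁻‖ := by
        rw [hQ.norm_mul f g⁺ hf (posPart_nonneg g), hQ.norm_mul f g⁻ hf (negPart_nonneg g)]
    _ ≤ ‖f‖ * ‖g‖ + ‖f‖ * ‖g‖ := by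
        gcongr
        exacts [aux_norm_posPart_le g, aux_norm_negPart_le g]
    _ = 2 * (‖f‖ * ‖g‖) := by ring

theorem norm_le_left (hQ : IsQSO μ Q) {g : Lp ℝ 1 μ} (hg : 0 ≤ g) (f : Lp ℝ 1 μ) :
    ‖Q f g‖ ≤ 2 * (‖f‖ * ‖g‖) := by
  rw [hQ.symm, mul_comm ‖f‖]
  exact hQ.norm_le_right hg f

theorem mem_density (hQ : IsQSO μ Q) {f g : Lp ℝ 1 μ}
    (hf : f ∈ Density μ) (hg : g ∈ Density μ) : Q f g ∈ Density μ :=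
  ⟨hQ.nonneg f g hf.1 hg.1, by rw [hQ.norm_mul f g hf.1 hg.1, hf.2, hg.2, one_mul]⟩

theorem qiter_mem (hQ : IsQSO μ Q) {f : Lp ℝ 1 μ} (hf : f ∈ Density μ) (k : ℕ) :
    Qiter Q k f ∈ Density μ := by
  induction k with
  | zero => exact hf
  | succ k ih =>
      have : Qiter Q (k + 1) f = Q (Qiter Q k f) (Qiter Q k f) := by
        rw [Qiter, Function.iterate_succ_apply']; rfl
      rw [this]
      exact hQ.mem_density ih ih

theorem pchain_mem (hQ : IsQSO μ Q) {f g : Lp ℝ 1 μ}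
    (hf : f ∈ Density μ) (hg : g ∈ Density μ) (k : ℕ) : Pchain Q f k g ∈ Density μ := by
  induction k with
  | zero => exact hg
  | succ k ih => exact hQ.mem_density (hQ.qiter_mem hf k) ih

end IsQSO

end AuxQSO
section AuxDU
open MeasureTheory
variable {X : Type*} [MeasurableSpace X] {μ : Measure X}
variable {Q Q' : Lp ℝ 1 μ → Lp ℝ 1 μ → Lp ℝ 1 μ}

theorem le_du (hQ : IsQSO μ Q) (hQ' : IsQSO μ Q') {f : Lp ℝ 1 μ} (hf : f ∈ Density μ) :
    ‖Q f f - Q' f f‖ ≤ du μ Q Q' := by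
  have hb : BddAbove (Set.range fun g : Density μ => ‖Q g g - Q' g g‖) := by
    refine ⟨2, ?_⟩
    rintro x ⟨g, rfl⟩
    calc ‖Q g g - Q' g g‖ ≤ ‖Q (g:Lp ℝ 1 μ) g‖ + ‖Q' (g:Lp ℝ 1 μ) g‖ := norm_sub_le _ _
      _ ≤ 2 := by
          rw [(hQ.mem_density g.2 g.2).2, (hQ'.mem_density g.2 g.2).2]; norm_num
  exact le_ciSup hb (⟨f, hf⟩ : Density μ)

theorem du_nonneg (hQ : IsQSO μ Q) (hQ' : IsQSO μ Q') {f : Lp ℝ 1 μ} (hf : f ∈ Density μ) :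
    0 ≤ du μ Q Q' :=
  le_trans (norm_nonneg _) (le_du hQ hQ' hf)

theorem du_symm : du μ Q Q' = du μ Q' Q := by
  unfold du
  exact iSup_congr fun f => norm_sub_rev _ _

/-- Polarization bound: `‖Q f g - Q' f g‖ ≤ 3 d_u(Q,Q')` for densities `f, g`. -/
theorem norm_sub_app_le (hQ : IsQSO μ Q) (hQ' : IsQSO μ Q') {f g : Lp ℝ 1 μ}
    (hf : f ∈ Density μ) (hg : g ∈ Density μ) : ‖Q f g - Q' f g‖ ≤ 3 * du μ Q Q' := by
  set m : Lp ℝ 1 μ := (2⁻¹ : ℝ) • (f + g) with hm_def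
  have hm : m ∈ Density μ := by
    constructor
    · have hfg : 0 ≤ f + g := add_nonneg hf.1 hg.1
      rw [← Lp.coeFn_nonneg] at hfg ⊢
      filter_upwards [hfg, Lp.coeFn_smul (2⁻¹:ℝ) (f + g)] with a ha hb
      rw [hm_def, hb]
      simpa using mul_nonneg (by norm_num : (0:ℝ) ≤ 2⁻¹) ha
    · rw [hm_def, norm_smul, aux_norm_add f g hf.1 hg.1, hf.2, hg.2]
      norm_num
  have hexp : ∀ R : Lp ℝ 1 μ → Lp ℝ 1 μ → Lp ℝ 1 μ, IsQSO μ R →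
      R m m = (2⁻¹:ℝ) • ((2⁻¹:ℝ) • (R f f + R f g + (R f g + R g g))) := by
    intro R hR
    rw [hm_def, hR.smul_left, hR.smul_right, hR.add_left, hR.add_right, hR.add_right,
      hR.symm g f]
  have key : Q f g - Q' f g = (2:ℝ) • (Q m m - Q' m m)
      - (2⁻¹:ℝ) • (Q f f - Q' f f) - (2⁻¹:ℝ) • (Q g g - Q' g g) := by
    rw [hexp Q hQ, hexp Q' hQ']
    module
  have h1 := le_du hQ hQ' hm
  have h2 := le_du hQ hQ' hf
  have h3 := le_du hQ hQ' hg
  calc ‖Q f g - Q' f g‖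
      ≤ ‖(2:ℝ) • (Q m m - Q' m m) - (2⁻¹:ℝ) • (Q f f - Q' f f)‖
        + ‖(2⁻¹:ℝ) • (Q g g - Q' g g)‖ := by rw [key]; exact norm_sub_le _ _
    _ ≤ ‖(2:ℝ) • (Q m m - Q' m m)‖ + ‖(2⁻¹:ℝ) • (Q f f - Q' f f)‖
        + ‖(2⁻¹:ℝ) • (Q g g - Q' g g)‖ := by gcongr; exact norm_sub_le _ _
    _ = 2 * ‖Q m m - Q' m m‖ + 2⁻¹ * ‖Q f f - Q' f f‖ + 2⁻¹ * ‖Q g g - Q' g g‖ := by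
        rw [norm_smul, norm_smul, norm_smul]; norm_num
    _ ≤ 3 * du μ Q Q' := by linarith

theorem qiter_dist (hQ : IsQSO μ Q) (hQ' : IsQSO μ Q') {f : Lp ℝ 1 μ}
    (hf : f ∈ Density μ) (k : ℕ) :
    ‖Qiter Q k f - Qiter Q' k f‖ ≤ ((5:ℝ) ^ k - 1) * du μ Q Q' := by
  induction k with
  | zero => simp [Qiter]
  | succ k ih =>
      set u := Qiter Q k f with hu_def
      set v := Qiter Q' k f with hv_def
      have hu : u ∈ Density μ := hQ.qiter_mem hf k
      have hv : v ∈ Density μ := hQ'.qiter_mem hf k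
      have hstep : Qiter Q (k+1) f = Q u u := by
        rw [Qiter, Function.iterate_succ_apply']; rfl
      have hstep' : Qiter Q' (k+1) f = Q' v v := by
        rw [Qiter, Function.iterate_succ_apply']; rfl
      have decomp : Q u u - Q' v v = Q (u - v) u + Q v (u - v) + (Q v v - Q' v v) := by
        rw [hQ.sub_left, hQ.sub_right]; abel
      have t1 : ‖Q (u - v) u‖ ≤ 2 * ‖u - v‖ := by
        have := hQ.norm_le_left hu.1 (u - v)
        rwa [hu.2, mul_one] at this
      have t2 : ‖Q v (u - v)‖ ≤ 2 * ‖u - v‖ := by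
        have := hQ.norm_le_right hv.1 (u - v)
        rwa [hv.2, one_mul] at this
      have t3 : ‖Q v v - Q' v v‖ ≤ du μ Q Q' := le_du hQ hQ' hv
      have hd0 : 0 ≤ du μ Q Q' := du_nonneg hQ hQ' hf
      have hbig : ‖Q u u - Q' v v‖ ≤ 4 * ‖u - v‖ + du μ Q Q' := by
        calc ‖Q u u - Q' v v‖ ≤ ‖Q (u - v) u + Q v (u - v)‖ + ‖Q v v - Q' v v‖ := by
              rw [decomp]; exact norm_add_le _ _
          _ ≤ ‖Q (u - v) u‖ + ‖Q v (u - v)‖ + ‖Q v v - Q' v v‖ := by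
              gcongr; exact norm_add_le _ _
          _ ≤ 4 * ‖u - v‖ + du μ Q Q' := by linarith
      rw [hstep, hstep']
      have hp : (0:ℝ) < 5 ^ k := by positivity
      have hmul : 4 * ‖u - v‖ ≤ 4 * (((5:ℝ) ^ k - 1) * du μ Q Q') := by linarith
      have hpow : (5:ℝ) ^ (k + 1) = 5 * 5 ^ k := by rw [pow_succ]; ring
      rw [hpow]
      nlinarith [mul_nonneg hp.le hd0]

end AuxDU
section AuxChain
open MeasureTheory
variable {X : Type*} [MeasurableSpace X] {μ : Measure X}
variable {Q Q' : Lp ℝ 1 μ → Lp ℝ 1 μ → Lp ℝ 1 μ}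

theorem pchain_dist (hQ : IsQSO μ Q) (hQ' : IsQSO μ Q') {f g : Lp ℝ 1 μ}
    (hf : f ∈ Density μ) (hg : g ∈ Density μ) (k : ℕ) :
    ‖Pchain Q f k g - Pchain Q' f k g‖ ≤ (5:ℝ) ^ (k + 1) * du μ Q Q' := by
  have hd0 : 0 ≤ du μ Q Q' := du_nonneg hQ hQ' hf
  induction k with
  | zero =>
      have : Pchain Q f 0 g - Pchain Q' f 0 g = 0 := by simp [Pchain]
      rw [this, norm_zero]
      positivity
  | succ k ih =>
      set a := Qiter Q k f with ha_def
      set a' := Qiter Q' k f with ha'_def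
      set P := Pchain Q f k g with hP_def
      set P' := Pchain Q' f k g with hP'_def
      have ha : a ∈ Density μ := hQ.qiter_mem hf k
      have ha' : a' ∈ Density μ := hQ'.qiter_mem hf k
      have hP' : P' ∈ Density μ := hQ'.pchain_mem hf hg k
      have hstep : Pchain Q f (k+1) g = Q a P := rfl
      have hstep' : Pchain Q' f (k+1) g = Q' a' P' := rfl
      have decomp : Q a P - Q' a' P' = Q a (P - P') + Q (a - a') P' + (Q a' P' - Q' a' P') := by
        rw [hQ.sub_right, hQ.sub_left]; abel
      have t1 : ‖Q a (P - P')‖ ≤ 2 * ‖P - P'‖ := by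
        have := hQ.norm_le_right ha.1 (P - P')
        rwa [ha.2, one_mul] at this
      have t2 : ‖Q (a - a') P'‖ ≤ 2 * ‖a - a'‖ := by
        have := hQ.norm_le_left hP'.1 (a - a')
        rwa [hP'.2, mul_one] at this
      have t3 : ‖Q a' P' - Q' a' P'‖ ≤ 3 * du μ Q Q' := norm_sub_app_le hQ hQ' ha' hP'
      have hiter : ‖a - a'‖ ≤ ((5:ℝ) ^ k - 1) * du μ Q Q' := qiter_dist hQ hQ' hf k
      rw [hstep, hstep']
      have hbig : ‖Q a P - Q' a' P'‖
          ≤ 2 * ‖P - P'‖ + 2 * ‖a - a'‖ + 3 * du μ Q Q' := by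
        calc ‖Q a P - Q' a' P'‖
            ≤ ‖Q a (P - P') + Q (a - a') P'‖ + ‖Q a' P' - Q' a' P'‖ := by
              rw [decomp]; exact norm_add_le _ _
          _ ≤ ‖Q a (P - P')‖ + ‖Q (a - a') P'‖ + ‖Q a' P' - Q' a' P'‖ := by
              gcongr; exact norm_add_le _ _
          _ ≤ _ := by linarith
      have hp : (0:ℝ) < 5 ^ k := by positivity
      have hpow1 : (5:ℝ) ^ (k + 1) = 5 * 5 ^ k := by rw [pow_succ]; ring
      have hpow2 : (5:ℝ) ^ (k + 2) = 25 * 5 ^ k := by rw [pow_succ, pow_succ]; ring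
      have h1 : 2 * ‖P - P'‖ ≤ 2 * ((5:ℝ) ^ (k+1) * du μ Q Q') := by linarith
      have h2 : 2 * ‖a - a'‖ ≤ 2 * (((5:ℝ) ^ k - 1) * du μ Q Q') := by linarith
      rw [hpow2]
      rw [hpow1] at h1
      have h5 : (1:ℝ) ≤ 5 ^ k := one_le_pow₀ (by norm_num)
      nlinarith [mul_le_mul_of_nonneg_right h5 hd0]

theorem le_supDiff (hQ : IsQSO μ Q) {f g h : Lp ℝ 1 μ}
    (hf : f ∈ Density μ) (hg : g ∈ Density μ) (hh : h ∈ Density μ) (n : ℕ) :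
    ‖Pchain Q f n g - Pchain Q f n h‖ ≤ supDiff μ Q n := by
  have bound2 : ∀ (f' g' h' : Lp ℝ 1 μ), f' ∈ Density μ → g' ∈ Density μ → h' ∈ Density μ →
      ‖Pchain Q f' n g' - Pchain Q f' n h'‖ ≤ 2 := by
    intro f' g' h' hf' hg' hh'
    calc ‖Pchain Q f' n g' - Pchain Q f' n h'‖
        ≤ ‖Pchain Q f' n g'‖ + ‖Pchain Q f' n h'‖ := norm_sub_le _ _
      _ ≤ 2 := by
          rw [(hQ.pchain_mem hf' hg' n).2, (hQ.pchain_mem hf' hh' n).2]; norm_num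
  have step1 : ‖Pchain Q f n g - Pchain Q f n h‖
      ≤ ⨆ h' : Density μ, ‖Pchain Q f n g - Pchain Q f n h'‖ := by
    refine le_ciSup (f := fun h' : Density μ => ‖Pchain Q f n g - Pchain Q f n h'‖)
      ⟨2, ?_⟩ (⟨h, hh⟩ : Density μ)
    rintro x ⟨h', rfl⟩
    exact bound2 f g h' hf hg h'.2
  have step2 : (⨆ h' : Density μ, ‖Pchain Q f n g - Pchain Q f n h'‖)
      ≤ ⨆ g' : Density μ, ⨆ h' : Density μ, ‖Pchain Q f n g' - Pchain Q f n h'‖ := by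
    refine le_ciSup (f := fun g' : Density μ =>
      ⨆ h' : Density μ, ‖Pchain Q f n g' - Pchain Q f n h'‖) ⟨2, ?_⟩ (⟨g, hg⟩ : Density μ)
    rintro x ⟨g', rfl⟩
    exact Real.iSup_le (fun h' => bound2 f g' h' hf g'.2 h'.2) (by norm_num)
  have step3 : (⨆ g' : Density μ, ⨆ h' : Density μ, ‖Pchain Q f n g' - Pchain Q f n h'‖)
      ≤ supDiff μ Q n := by
    refine le_ciSup (f := fun f' : Density μ => ⨆ g' : Density μ,
      ⨆ h' : Density μ, ‖Pchain Q f' n g' - Pchain Q f' n h'‖) ⟨2, ?_⟩ (⟨f, hf⟩ : Density μ)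
    rintro x ⟨f', rfl⟩
    exact Real.iSup_le (fun g' => Real.iSup_le (fun h' => bound2 f' g' h' f'.2 g'.2 h'.2)
      (by norm_num)) (by norm_num)
  exact step1.trans (step2.trans step3)

theorem supDiff_nonneg (n : ℕ) : 0 ≤ supDiff μ Q n := by
  rcases isEmpty_or_nonempty (Density μ) with he | hne
  · rw [supDiff, Real.iSup_of_isEmpty]
  · exact Real.iSup_nonneg fun f => Real.iSup_nonneg fun g =>
      Real.iSup_nonneg fun h => norm_nonneg _

theorem supDiff_le_supDiff (hQ : IsQSO μ Q) (hQ' : IsQSO μ Q') (n : ℕ) :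
    supDiff μ Q n ≤ supDiff μ Q' n + 2 * (5:ℝ) ^ (n + 1) * du μ Q Q' := by
  rcases isEmpty_or_nonempty (Density μ) with he | hne
  · rw [supDiff, Real.iSup_of_isEmpty, supDiff, Real.iSup_of_isEmpty, du,
      Real.iSup_of_isEmpty]
    norm_num
  · obtain ⟨f0⟩ := hne
    have hd0 : 0 ≤ du μ Q Q' := du_nonneg hQ hQ' f0.2
    have hbnd : 0 ≤ supDiff μ Q' n + 2 * (5:ℝ) ^ (n + 1) * du μ Q Q' := by
      have := supDiff_nonneg (μ := μ) (Q := Q') n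
      positivity
    refine Real.iSup_le (fun f => Real.iSup_le (fun g => Real.iSup_le (fun h => ?_) hbnd) hbnd)
      hbnd
    have hG := pchain_dist hQ hQ' f.2 g.2 n
    have hH := pchain_dist hQ hQ' f.2 h.2 n
    have hS := le_supDiff hQ' f.2 g.2 h.2 n
    calc ‖Pchain Q f n g - Pchain Q f n h‖
        = ‖(Pchain Q' f n g - Pchain Q' f n h)
            + ((Pchain Q f n g - Pchain Q' f n g) - (Pchain Q f n h - Pchain Q' f n h))‖ := by
          congr 1; abel
      _ ≤ ‖Pchain Q' f n g - Pchain Q' f n h‖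
            + (‖Pchain Q f n g - Pchain Q' f n g‖ + ‖Pchain Q f n h - Pchain Q' f n h‖) :=
          (norm_add_le _ _).trans (by gcongr; exact norm_sub_le _ _)
      _ ≤ supDiff μ Q' n + 2 * (5:ℝ) ^ (n + 1) * du μ Q Q' := by linarith

end AuxChain
/-- For each fixed `n ≥ 1` the map
`Q ↦ sup_{f,g,h∈𝒟} ‖P_f^{[0,n]}(g) − P_f^{[0,n]}(h)‖₁` is continuous on `𝔔` for the
metric `d_u`; consequently the set
`{Q ∈ 𝔔 : sup_{f,g,h∈𝒟} ‖P_f^{[0,n]}(g) − P_f^{[0,n]}(h)‖₁ < 2}` is open in `(𝔔, d_u)`. -/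
theorem supDiff_continuous_open {X : Type*} [MeasurableSpace X]
    (μ : Measure X) [SigmaFinite μ] (n : ℕ) (hn : 1 ≤ n) :
    (∀ Q : Lp ℝ 1 μ → Lp ℝ 1 μ → Lp ℝ 1 μ, IsQSO μ Q → ∀ ε > (0 : ℝ),
      ∃ δ > (0 : ℝ), ∀ Q' : Lp ℝ 1 μ → Lp ℝ 1 μ → Lp ℝ 1 μ, IsQSO μ Q' →
        du μ Q Q' < δ → |supDiff μ Q n - supDiff μ Q' n| < ε) ∧
    (∀ Q : Lp ℝ 1 μ → Lp ℝ 1 μ → Lp ℝ 1 μ, IsQSO μ Q → supDiff μ Q n < 2 →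
      ∃ δ > (0 : ℝ), ∀ Q' : Lp ℝ 1 μ → Lp ℝ 1 μ → Lp ℝ 1 μ, IsQSO μ Q' →
        du μ Q Q' < δ → supDiff μ Q' n < 2) := by
  set K : ℝ := 2 * (5:ℝ) ^ (n + 1) with hK
  have hKpos : 0 < K := by positivity
  have key : ∀ Q Q' : Lp ℝ 1 μ → Lp ℝ 1 μ → Lp ℝ 1 μ, IsQSO μ Q → IsQSO μ Q' →
      |supDiff μ Q n - supDiff μ Q' n| ≤ K * du μ Q Q' := by
    intro Q Q' hQ hQ'
    rw [abs_sub_le_iff, hK]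
    constructor
    · have := supDiff_le_supDiff hQ hQ' n
      linarith
    · have h := supDiff_le_supDiff hQ' hQ n
      rw [← du_symm] at h
      linarith
  have part1 : ∀ Q : Lp ℝ 1 μ → Lp ℝ 1 μ → Lp ℝ 1 μ, IsQSO μ Q → ∀ ε > (0 : ℝ),
      ∃ δ > (0 : ℝ), ∀ Q' : Lp ℝ 1 μ → Lp ℝ 1 μ → Lp ℝ 1 μ, IsQSO μ Q' →
        du μ Q Q' < δ → |supDiff μ Q n - supDiff μ Q' n| < ε := by
    intro Q hQ ε hε
    refine ⟨ε / (K + 1), by positivity, fun Q' hQ' hlt => ?_⟩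
    have h1 := key Q Q' hQ hQ'
    have h2 : K * du μ Q Q' < K * (ε / (K + 1)) := mul_lt_mul_of_pos_left hlt hKpos
    have h3 : K * (ε / (K + 1)) < ε := by
      rw [mul_comm, div_mul_eq_mul_div, div_lt_iff₀ (by positivity : 0 < K + 1)]
      nlinarith
    linarith
  refine ⟨part1, fun Q hQ hs => ?_⟩
  obtain ⟨δ, hδ, hδ2⟩ := part1 Q hQ (2 - supDiff μ Q n) (by linarith)
  refine ⟨δ, hδ, fun Q' hQ' hlt => ?_⟩
  have := hδ2 Q' hQ' hlt
  rw [abs_sub_lt_iff] at this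
  linarith
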